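/- arXiv:2011.01568 — 2 statements merged into one kernel-verified Lean document; each statement's English description precedes it below -/
import Mathlib

section
/- Let V̄ be a symmetric PSD matrix, P an orthogonal projection with span(V̄) ⊆ span(P), and V = V̄ + P. Then for any vector λ ∈ span(P) and any vector S ∈ span(V̄): ‖λ − V̄† S‖²_{V̄} + ‖λ‖²_P = ‖λ − V† S‖²_V + ‖S‖²_{V̄†} − ‖S‖²_{V†}, where ‖x‖²_A = xᵀ A x. -/
/-!
For a symmetric `A` with Moore–Penrose inverse `A†`, the matrix `A A†` is the orthogonal projection
onto the range of `A`. Since `V̄` and `P` are PSD, `ker V = ker V̄ ∩ ker P`, so the range of `V̄` lies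
in that of `V` and `S` is fixed by both `V̄ V̄†` and `V V†`. Completing the square then gives
`‖λ − A† S‖²_A = ‖λ‖²_A − 2 ⟨S, λ⟩ + ‖S‖²_{A†}` for `A = V̄` and `A = V`, and the identity follows
from `‖λ‖²_V = ‖λ‖²_{V̄} + ‖λ‖²_P`.
-/

open Matrix

/-- The four Moore–Penrose conditions characterizing the pseudoinverse. -/
def IsMoorePenrose {n : ℕ} (A X : Matrix (Fin n) (Fin n) ℝ) : Prop :=
  A * X * A = A ∧ X * A * X = X ∧ (A * X)ᵀ = A * X ∧ (X * A)ᵀ = X * A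

/-- The squared semi-norm `‖x‖²_A = xᵀ A x` induced by a PSD matrix `A`. -/
def normSq {n : ℕ} (A : Matrix (Fin n) (Fin n) ℝ) (x : Fin n → ℝ) : ℝ :=
  x ⬝ᵥ A.mulVec x

namespace Matrix

variable {m : Type*} [Fintype m]

theorem PosSemidef.ker_add_le_left {A B : Matrix m m ℝ} (hA : A.PosSemidef) (hB : B.PosSemidef) :
    LinearMap.ker (A + B).mulVecLin ≤ LinearMap.ker A.mulVecLin := by
  intro v hv
  simp only [LinearMap.mem_ker, mulVecLin_apply, add_mulVec] at hv ⊢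
  have hsum : v ⬝ᵥ A *ᵥ v + v ⬝ᵥ B *ᵥ v = 0 := by rw [← dotProduct_add, hv, dotProduct_zero]
  have hA_nonneg : 0 ≤ v ⬝ᵥ A *ᵥ v := by
    simpa only [star_trivial] using hA.dotProduct_mulVec_nonneg v
  have hB_nonneg : 0 ≤ v ⬝ᵥ B *ᵥ v := by
    simpa only [star_trivial] using hB.dotProduct_mulVec_nonneg v
  refine (hA.dotProduct_mulVec_zero_iff v).mp ?_
  rw [star_trivial]
  linarith

theorem posSemidef_of_transpose_eq_of_mul_self_eq {P : Matrix m m ℝ} (hPsymm : Pᵀ = P)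
    (hPidem : P * P = P) : P.PosSemidef := by
  simpa [conjTranspose_eq_transpose_of_trivial, hPsymm, hPidem] using
    posSemidef_conjTranspose_mul_self P

-- `A * X` is the orthogonal projection onto the range of `A`, which contains that of `Bᵀ`.
theorem mul_mul_transpose_eq_of_ker_le [DecidableEq m] {A X B : Matrix m m ℝ} (hA : Aᵀ = A)
    (hAXA : A * X * A = A) (hAX : (A * X)ᵀ = A * X)
    (hker : LinearMap.ker A.mulVecLin ≤ LinearMap.ker B.mulVecLin) :
    A * X * Bᵀ = Bᵀ := by
  have hA_compl : A * (1 - A * X) = 0 := by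
    rw [← transpose_transpose (A * (1 - A * X)), transpose_mul, transpose_sub, transpose_one, hAX,
      hA, sub_mul, one_mul, hAXA, sub_self, transpose_zero]
  have hB_compl : B * (1 - A * X) = 0 := by
    refine ext_iff_mulVec.mpr fun v => ?_
    have hv : (1 - A * X) *ᵥ v ∈ LinearMap.ker A.mulVecLin := by
      simp [mulVec_mulVec, hA_compl]
    simpa [mulVecLin_apply, mulVec_mulVec] using hker hv
  rw [mul_sub, mul_one, sub_eq_zero] at hB_compl
  rw [← hAX, ← transpose_mul, ← hB_compl]

end Matrix

theorem normSq_add_left {n : ℕ} (A B : Matrix (Fin n) (Fin n) ℝ) (x : Fin n → ℝ) :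
    normSq (A + B) x = normSq A x + normSq B x := by
  simp only [normSq, add_mulVec, dotProduct_add]

theorem normSq_sub_mulVec {n : ℕ} {A X : Matrix (Fin n) (Fin n) ℝ} (hA : Aᵀ = A)
    (lam S : Fin n → ℝ) (hS : A *ᵥ X *ᵥ S = S) :
    normSq A (lam - X *ᵥ S) = normSq A lam - 2 * (S ⬝ᵥ lam) + normSq X S := by
  have hsymm : ∀ u, (X *ᵥ S) ⬝ᵥ A *ᵥ u = S ⬝ᵥ u := fun u => by
    rw [dotProduct_mulVec, ← mulVec_transpose, hA, hS]
  simp only [normSq, mulVec_sub, dotProduct_sub, sub_dotProduct, hsymm, hS, dotProduct_comm lam S,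
    dotProduct_comm S (X *ᵥ S)]
  ring

theorem stmt9_general {n : ℕ} (Vbar P V Vbard Vd : Matrix (Fin n) (Fin n) ℝ)
    (hVbar : Vbar.PosSemidef)
    (hPsymm : Pᵀ = P) (hPidem : P * P = P)
    (hV : V = Vbar + P)
    (hVbard : IsMoorePenrose Vbar Vbard)
    (hVd : IsMoorePenrose V Vd)
    (lam S : Fin n → ℝ)
    (hS : ∃ y, S = Vbar.mulVec y) :
    normSq Vbar (lam - Vbard.mulVec S) + normSq P lam
      = normSq V (lam - Vd.mulVec S) + normSq Vbard S - normSq Vd S := by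
  obtain ⟨y, rfl⟩ := hS
  have hP : P.PosSemidef := posSemidef_of_transpose_eq_of_mul_self_eq hPsymm hPidem
  have hVbar_symm : Vbarᵀ = Vbar := hVbar.1
  have hV_symm : Vᵀ = V := by rw [hV, transpose_add, hVbar_symm, hPsymm]
  have hV_proj : V * Vd * Vbar = Vbar := by
    simpa only [hVbar_symm] using
      mul_mul_transpose_eq_of_ker_le (B := Vbar) hV_symm hVd.1 hVd.2.2.1
        (hV ▸ hVbar.ker_add_le_left hP)
  rw [normSq_sub_mulVec hVbar_symm _ _ (by rw [mulVec_mulVec, mulVec_mulVec, hVbard.1]),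
    normSq_sub_mulVec hV_symm _ _ (by rw [mulVec_mulVec, mulVec_mulVec, hV_proj]), hV,
    normSq_add_left]
  ring

/-- Completing-the-square identity: with `V = V̄ + P`, for `λ ∈ range P` and
`S ∈ span(V̄)`,
`‖λ − V̄† S‖²_{V̄} + ‖λ‖²_P = ‖λ − V† S‖²_V + ‖S‖²_{V̄†} − ‖S‖²_{V†}`. -/
theorem stmt9 {n : ℕ} (Vbar P V Vbard Vd : Matrix (Fin n) (Fin n) ℝ)
    (hVbar : Vbar.PosSemidef)
    (hPsymm : Pᵀ = P) (hPidem : P * P = P)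
    (hspan : P * Vbar = Vbar)
    (hV : V = Vbar + P)
    (hVbard : IsMoorePenrose Vbar Vbard)
    (hVd : IsMoorePenrose V Vd)
    (lam S : Fin n → ℝ)
    (hlam : P.mulVec lam = lam)
    (hS : ∃ y, S = Vbar.mulVec y) :
    normSq Vbar (lam - Vbard.mulVec S) + normSq P lam
      = normSq V (lam - Vd.mulVec S) + normSq Vbard S - normSq Vd S :=
  stmt9_general Vbar P V Vbard Vd hVbar hPsymm hPidem hV hVbard hVd lam S hS
end

section
/- Let V̄ be symmetric PSD, P an orthogonal projection with span(V̄) ⊆ range(P), and V = V̄ + P. Then V is invertible when restricted to range(P); in particular V† V = P and ‖V̄^{1/2} (V†)^{1/2} x‖₂ ≤ ‖x‖₂ for all x, i.e., (V†)^{1/2} V̄ (V†)^{1/2} ⪯ I. -/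
open Matrix

/-- The positive semidefinite square root of a positive semidefinite matrix
(the definition `Matrix.PosSemidef.sqrt` of the older Mathlib, removed since). -/
noncomputable def Matrix.PosSemidef.sqrt {n : Type*} [Fintype n] [DecidableEq n]
    {𝕜 : Type*} [RCLike 𝕜] [PartialOrder 𝕜] [StarOrderedRing 𝕜] {A : Matrix n n 𝕜} (hA : A.PosSemidef) : Matrix n n 𝕜 :=
  (hA.1.eigenvectorUnitary : Matrix n n 𝕜) *
    diagonal ((RCLike.ofReal : ℝ → 𝕜) ∘ (√·) ∘ hA.1.eigenvalues) *
    (star hA.1.eigenvectorUnitary : Matrix n n 𝕜)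

/-! With `W = (V̄ + 1)⁻¹`, the condition `P V̄ = V̄` gives `V = P (V̄ + 1) = (V̄ + 1) P`, so `P W`
satisfies the Moore–Penrose conditions for `V` with `V (P W) = (P W) V = P`; hence
`V† = P W = Pᵀ W P ⪰ 0`. For `S = (V†)^{1/2}`, the identity `V V† V = V` makes `S V S` a
self-adjoint idempotent, so `S V S ⪯ 1`, while `S V̄ S = S V S - S P S ⪯ S V S`. -/

open scoped MatrixOrder

theorem Matrix.PosSemidef.sqrt_eq_cfcSqrt {ι : Type*} [Fintype ι] [DecidableEq ι]
    {A : Matrix ι ι ℝ} (hA : A.PosSemidef) : hA.sqrt = CFC.sqrt A := by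
  rw [CFC.sqrt_eq_real_sqrt A hA.nonneg, cfcₙ_eq_cfc, hA.1.cfc_eq]
  rfl

theorem IsSelfAdjoint.isStarProjection_mul_mul {R : Type*} [Semigroup R] [StarMul R] {s a : R}
    (hs : IsSelfAdjoint s) (ha : IsSelfAdjoint a) (h : a * (s * s) * a = a) :
    IsStarProjection (s * a * s) where
  isIdempotentElem := by
    calc s * a * s * (s * a * s) = s * (a * (s * s) * a) * s := by simp only [mul_assoc]
      _ = s * a * s := by rw [h]
  isSelfAdjoint := by
    rw [IsSelfAdjoint, star_mul, star_mul, hs.star_eq, ha.star_eq, mul_assoc]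

theorem Matrix.commute_nonsing_inv_left {ι α : Type*} [Fintype ι] [DecidableEq ι] [CommRing α]
    {B P : Matrix ι ι α} (hB : IsUnit B.det) (h : Commute B P) : Commute B⁻¹ P :=
  Commute.units_inv_left (u := B.nonsingInvUnit hB) h

theorem Matrix.isSelfAdjoint_iff_transpose_eq {ι α : Type*} [Star α] [TrivialStar α]
    {A : Matrix ι ι α} : IsSelfAdjoint A ↔ Aᵀ = A := by
  rw [IsSelfAdjoint, star_eq_conjTranspose, conjTranspose_eq_transpose_of_trivial]

namespace IsMoorePenrose

variable {n : ℕ} {A X Y : Matrix (Fin n) (Fin n) ℝ}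

theorem unique (hX : IsMoorePenrose A X) (hY : IsMoorePenrose A Y) : X = Y := by
  obtain ⟨hX1, hX2, hX3, hX4⟩ := hX
  obtain ⟨hY1, hY2, hY3, hY4⟩ := hY
  have hAX : A * X = A * Y :=
    calc A * X = (A * Y * A) * X := by rw [hY1]
      _ = ((A * X)ᵀ * (A * Y)ᵀ)ᵀ := by
        simp only [transpose_mul, transpose_transpose, Matrix.mul_assoc]
      _ = ((A * X * A) * Y)ᵀ := by rw [hX3, hY3]; simp only [Matrix.mul_assoc]
      _ = A * Y := by rw [hX1, hY3]
  have hXA : X * A = Y * A :=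
    calc X * A = X * (A * Y * A) := by rw [hY1]
      _ = ((Y * A)ᵀ * (X * A)ᵀ)ᵀ := by
        simp only [transpose_mul, transpose_transpose, Matrix.mul_assoc]
      _ = (Y * (A * X * A))ᵀ := by rw [hX4, hY4]; simp only [Matrix.mul_assoc]
      _ = Y * A := by rw [hX1, hY4]
  calc X = X * A * X := hX2.symm
    _ = Y * A * Y := by rw [Matrix.mul_assoc, hAX, ← Matrix.mul_assoc, hXA]
    _ = Y := hY2

theorem of_mul_eq_of_mul_eq {P : Matrix (Fin n) (Fin n) ℝ} (hPsymm : Pᵀ = P)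
    (hAX : A * X = P) (hXA : X * A = P) (hPA : P * A = A) (hPX : P * X = X) :
    IsMoorePenrose A X :=
  ⟨by rw [hAX, hPA], by rw [hXA, hPX], by rw [hAX, hPsymm], by rw [hXA, hPsymm]⟩

end IsMoorePenrose

section AddProjection

variable {n : ℕ} {Vbar P : Matrix (Fin n) (Fin n) ℝ}

theorem isUnit_det_add_one (hVbar : Vbar.PosSemidef) : IsUnit (Vbar + 1).det :=
  (PosDef.posSemidef_add hVbar PosDef.one).det_pos.ne'.isUnit

theorem add_eq_mul_add_one (hspan : P * Vbar = Vbar) : Vbar + P = P * (Vbar + 1) := by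
  rw [mul_add, mul_one, hspan]

theorem add_eq_add_one_mul (hVbar : Vbar.PosSemidef) (hP : IsSelfAdjoint P)
    (hspan : P * Vbar = Vbar) : Vbar + P = (Vbar + 1) * P := by
  have hVbarP : Vbar * P = Vbar := by
    simpa only [star_mul, hP.star_eq, hVbar.isHermitian.isSelfAdjoint.star_eq]
      using congrArg star hspan
  rw [add_mul, one_mul, hVbarP]

theorem commute_inv_add_one (hVbar : Vbar.PosSemidef) (hP : IsSelfAdjoint P)
    (hspan : P * Vbar = Vbar) : Commute (Vbar + 1)⁻¹ P :=
  Commute.units_inv_left (u := (Vbar + 1).nonsingInvUnit (isUnit_det_add_one hVbar))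
    ((add_eq_add_one_mul hVbar hP hspan).symm.trans (add_eq_mul_add_one hspan))

theorem add_mul_mul_inv_add_one (hVbar : Vbar.PosSemidef) (hP : IsStarProjection P)
    (hspan : P * Vbar = Vbar) : (Vbar + P) * (P * (Vbar + 1)⁻¹) = P := by
  rw [add_eq_add_one_mul hVbar hP.isSelfAdjoint hspan, Matrix.mul_assoc, ← Matrix.mul_assoc P,
    hP.isIdempotentElem.eq, ← (commute_inv_add_one hVbar hP.isSelfAdjoint hspan).eq,
    ← Matrix.mul_assoc, mul_nonsing_inv _ (isUnit_det_add_one hVbar), Matrix.one_mul]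

theorem mul_inv_add_one_mul_add (hVbar : Vbar.PosSemidef) (hP : IsStarProjection P)
    (hspan : P * Vbar = Vbar) : P * (Vbar + 1)⁻¹ * (Vbar + P) = P := by
  have hcomm : (Vbar + 1)⁻¹ * P = P * (Vbar + 1)⁻¹ :=
    commute_inv_add_one hVbar hP.isSelfAdjoint hspan
  rw [add_eq_mul_add_one hspan, ← hcomm, Matrix.mul_assoc, ← Matrix.mul_assoc P,
    hP.isIdempotentElem.eq, ← Matrix.mul_assoc, hcomm, Matrix.mul_assoc,
    nonsing_inv_mul _ (isUnit_det_add_one hVbar), Matrix.mul_one]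

theorem isMoorePenrose_add_projection (hVbar : Vbar.PosSemidef) (hP : IsStarProjection P)
    (hspan : P * Vbar = Vbar) : IsMoorePenrose (Vbar + P) (P * (Vbar + 1)⁻¹) :=
  .of_mul_eq_of_mul_eq (isSelfAdjoint_iff_transpose_eq.mp hP.isSelfAdjoint)
    (add_mul_mul_inv_add_one hVbar hP hspan) (mul_inv_add_one_mul_add hVbar hP hspan)
    (by rw [add_eq_mul_add_one hspan, ← Matrix.mul_assoc, hP.isIdempotentElem.eq])
    (by rw [← Matrix.mul_assoc, hP.isIdempotentElem.eq])

theorem posSemidef_mul_inv_add_one (hVbar : Vbar.PosSemidef) (hP : IsStarProjection P)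
    (hspan : P * Vbar = Vbar) : (P * (Vbar + 1)⁻¹).PosSemidef := by
  have hconj : P * (Vbar + 1)⁻¹ = star P * (Vbar + 1)⁻¹ * P := by
    rw [Matrix.mul_assoc, (commute_inv_add_one hVbar hP.isSelfAdjoint hspan).eq,
      ← Matrix.mul_assoc, hP.isSelfAdjoint.star_eq, hP.isIdempotentElem.eq]
  have hinv : 0 ≤ (Vbar + 1)⁻¹ := (PosDef.posSemidef_add hVbar PosDef.one).inv.posSemidef.nonneg
  exact hconj ▸ (star_left_conjugate_nonneg hinv P).posSemidef

end AddProjection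

/-- With `V = V̄ + P`, `V` is invertible on `range P`: `V† V = P`, and
`(V†)^{1/2} V̄ (V†)^{1/2} ⪯ I`. -/
theorem stmt10 {n : ℕ} (Vbar P V Vd : Matrix (Fin n) (Fin n) ℝ)
    (hVbar : Vbar.PosSemidef)
    (hPsymm : Pᵀ = P) (hPidem : P * P = P)
    (hspan : P * Vbar = Vbar)
    (hV : V = Vbar + P)
    (hVd : IsMoorePenrose V Vd) :
    ∃ hpsd : Vd.PosSemidef,
      Vd * V = P ∧ (1 - hpsd.sqrt * Vbar * hpsd.sqrt).PosSemidef := by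
  have hP : IsStarProjection P := ⟨hPidem, isSelfAdjoint_iff_transpose_eq.mpr hPsymm⟩
  have hVd_eq : Vd = P * (Vbar + 1)⁻¹ :=
    hVd.unique (hV ▸ isMoorePenrose_add_projection hVbar hP hspan)
  have hpsd : Vd.PosSemidef := hVd_eq ▸ posSemidef_mul_inv_add_one hVbar hP hspan
  refine ⟨hpsd, hVd_eq ▸ hV ▸ mul_inv_add_one_mul_add hVbar hP hspan, ?_⟩
  rw [hpsd.sqrt_eq_cfcSqrt]
  set S := CFC.sqrt Vd
  have hS : IsSelfAdjoint S := (CFC.sqrt_nonneg Vd).isSelfAdjoint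
  have hV_sa : IsSelfAdjoint V := hV ▸ hVbar.isHermitian.isSelfAdjoint.add hP.isSelfAdjoint
  have hSVS : IsStarProjection (S * V * S) :=
    hS.isStarProjection_mul_mul hV_sa
      (by rw [CFC.sqrt_mul_sqrt_self Vd hpsd.nonneg]; exact hVd.1)
  have hsplit : 1 - S * Vbar * S = (1 - S * V * S) + star S * P * S := by
    rw [hS.star_eq, hV]
    noncomm_ring
  rw [hsplit]
  exact (add_nonneg hSVS.one_sub_nonneg (star_left_conjugate_nonneg hP.nonneg S)).posSemidef
end
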